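/- Let N = n² for an even positive integer n, and for 0 ≤ k, l < n/2 let k̃ = 2πk/n, l̃ = 2πl/n. Then the double sum over all pairs (k,l) with 1 ≤ k,l ≤ n/2 − 1 of (1/(1 − cos²(k̃)·cos²(l̃)))² is Θ(N²) as N → ∞. -/

import Mathlib

open Real Filter Finset Asymptotics

/-! Since `1 - cos² a cos² b` dominates both `sin² a` and `sin² b`, each term is at most
`sin⁻² a · sin⁻² b`, so for `n = 2m` the double sum is at most `(∑_{0<k<m} sin⁻² (πk/m))²`.
Jordan's inequality `sin x ≥ 2x/π`, applied at `x` or at `π - x`, bounds this single sum by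
`(m²/4) · 2 · ∑ 1/k² ≤ m²`. Conversely the term `k = l = 1` alone is of order `n⁴`, because
`1 - cos⁴ x ≤ 2 sin² x ≤ 2x²` at `x = 2π/n`. -/

lemma one_div_sin_sq_le_of_le_pi_div_two {x : ℝ} (hx₀ : 0 < x) (hx : x ≤ π / 2) :
    1 / sin x ^ 2 ≤ (π / 2) ^ 2 / x ^ 2 := by
  have hjordan : 2 / π * x ≤ sin x := mul_le_sin hx₀.le hx
  calc 1 / sin x ^ 2 ≤ 1 / (2 / π * x) ^ 2 := by gcongr
    _ = (π / 2) ^ 2 / x ^ 2 := by field_simp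

lemma one_div_sin_sq_le {x : ℝ} (hx₀ : 0 < x) (hx : x < π) :
    1 / sin x ^ 2 ≤ (π / 2) ^ 2 / x ^ 2 + (π / 2) ^ 2 / (π - x) ^ 2 := by
  have h₁ : 0 ≤ (π / 2) ^ 2 / x ^ 2 := by positivity
  have h₂ : 0 ≤ (π / 2) ^ 2 / (π - x) ^ 2 := by positivity
  rcases le_total x (π / 2) with hle | hle
  · linarith [one_div_sin_sq_le_of_le_pi_div_two hx₀ hle]
  · have := one_div_sin_sq_le_of_le_pi_div_two (x := π - x) (by linarith) (by linarith)
    rw [sin_pi_sub] at this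
    linarith

lemma sum_Ioo_inv_sq_reflect (m : ℕ) :
    ∑ k ∈ Ioo 0 m, (((m - k : ℕ) : ℝ) ^ 2)⁻¹ = ∑ k ∈ Ioo 0 m, ((k : ℝ) ^ 2)⁻¹ := by
  refine sum_nbij' (m - ·) (m - ·) ?_ ?_ ?_ ?_ (fun _ _ => rfl) <;>
    intro k hk <;> simp only [mem_Ioo] at hk ⊢ <;> omega

lemma sum_one_div_sin_sq_le (m : ℕ) : ∑ k ∈ Ioo 0 m, 1 / sin (π * k / m) ^ 2 ≤ (m : ℝ) ^ 2 := by
  have hterm : ∀ k ∈ Ioo 0 m, 1 / sin (π * k / m) ^ 2 ≤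
      (m : ℝ) ^ 2 / 4 * (((k : ℝ) ^ 2)⁻¹ + (((m - k : ℕ) : ℝ) ^ 2)⁻¹) := by
    intro k hk
    obtain ⟨hk₀, hkm⟩ := mem_Ioo.mp hk
    have hm : (0 : ℝ) < m := by exact_mod_cast hk₀.trans hkm
    have hk : (0 : ℝ) < k := by exact_mod_cast hk₀
    have hmk : (0 : ℝ) < m - k := by simpa using (Nat.cast_lt (α := ℝ)).mpr hkm
    have hsub : π - π * k / m = π * (m - k) / m := by field_simp
    have := one_div_sin_sq_le (x := π * k / m) (by positivity)
      (by rw [div_lt_iff₀ hm]; nlinarith [pi_pos, (Nat.cast_lt (α := ℝ)).mpr hkm])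
    rw [hsub] at this
    refine this.trans_eq ?_
    rw [Nat.cast_sub hkm.le]
    field_simp
    ring
  calc ∑ k ∈ Ioo 0 m, 1 / sin (π * k / m) ^ 2
      ≤ ∑ k ∈ Ioo 0 m, (m : ℝ) ^ 2 / 4 * (((k : ℝ) ^ 2)⁻¹ + (((m - k : ℕ) : ℝ) ^ 2)⁻¹) :=
        sum_le_sum hterm
    _ = (m : ℝ) ^ 2 / 4 * (2 * ∑ k ∈ Ioo 0 m, ((k : ℝ) ^ 2)⁻¹) := by
        rw [← mul_sum, sum_add_distrib, sum_Ioo_inv_sq_reflect, two_mul]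
    _ ≤ (m : ℝ) ^ 2 / 4 * (2 * 2) := by
        gcongr
        simpa using sum_Ioo_inv_sq_le (α := ℝ) 0 m
    _ = (m : ℝ) ^ 2 := by ring

lemma sin_sq_le_one_sub_cos_sq_mul_cos_sq (a b : ℝ) : sin a ^ 2 ≤ 1 - cos a ^ 2 * cos b ^ 2 := by
  nlinarith [sin_sq_add_cos_sq a, cos_sq_le_one b, sq_nonneg (cos a)]

lemma one_div_one_sub_cos_sq_mul_cos_sq_sq_le {a b : ℝ} (ha : sin a ≠ 0) (hb : sin b ≠ 0) :
    (1 / (1 - cos a ^ 2 * cos b ^ 2)) ^ 2 ≤ 1 / sin a ^ 2 * (1 / sin b ^ 2) := by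
  have hA := sin_sq_le_one_sub_cos_sq_mul_cos_sq a b
  have hB : sin b ^ 2 ≤ 1 - cos a ^ 2 * cos b ^ 2 := by
    rw [mul_comm]; exact sin_sq_le_one_sub_cos_sq_mul_cos_sq b a
  rw [div_pow, one_pow, one_div_mul_one_div, sq (1 - _)]
  exact one_div_le_one_div_of_le (by positivity)
    (mul_le_mul hA hB (by positivity) ((sq_nonneg _).trans hA))

lemma one_sub_cos_sq_mul_cos_sq_self_le (x : ℝ) : 1 - cos x ^ 2 * cos x ^ 2 ≤ 2 * x ^ 2 := by
  nlinarith [sin_sq_add_cos_sq x, sin_sq_le_sq (x := x), cos_sq_le_one x, sq_nonneg (sin x)]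

noncomputable def doubleSum (n : ℕ) : ℝ :=
  ∑ k ∈ Icc 1 (n / 2 - 1), ∑ l ∈ Icc 1 (n / 2 - 1),
    (1 / (1 - cos (2 * π * k / n) ^ 2 * cos (2 * π * l / n) ^ 2)) ^ 2

lemma doubleSum_nonneg (n : ℕ) : 0 ≤ doubleSum n :=
  sum_nonneg fun _ _ => sum_nonneg fun _ _ => sq_nonneg _

lemma doubleSum_two_mul_le (m : ℕ) : doubleSum (2 * m) ≤ (m : ℝ) ^ 4 := by
  have hIcc : Icc 1 (2 * m / 2 - 1) = Ioo 0 m := by ext; simp only [mem_Icc, mem_Ioo]; omega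
  have hangle : ∀ k : ℕ, 2 * π * k / ((2 * m : ℕ) : ℝ) = π * k / m := fun k => by
    push_cast; rw [mul_assoc, mul_div_mul_left _ _ two_ne_zero]
  have hsin : ∀ k ∈ Ioo 0 m, sin (π * k / m) ≠ 0 := by
    intro k hk
    obtain ⟨hk₀, hkm⟩ := mem_Ioo.mp hk
    have hm : (0 : ℝ) < m := by exact_mod_cast hk₀.trans hkm
    refine (sin_pos_of_pos_of_lt_pi (by positivity) ?_).ne'
    rw [div_lt_iff₀ hm]; nlinarith [pi_pos, (Nat.cast_lt (α := ℝ)).mpr hkm]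
  calc doubleSum (2 * m)
      = ∑ k ∈ Ioo 0 m, ∑ l ∈ Ioo 0 m,
          (1 / (1 - cos (π * k / m) ^ 2 * cos (π * l / m) ^ 2)) ^ 2 := by
        simp only [doubleSum, hIcc, hangle]
    _ ≤ ∑ k ∈ Ioo 0 m, ∑ l ∈ Ioo 0 m, 1 / sin (π * k / m) ^ 2 * (1 / sin (π * l / m) ^ 2) :=
        sum_le_sum fun k hk => sum_le_sum fun l hl =>
          one_div_one_sub_cos_sq_mul_cos_sq_sq_le (hsin k hk) (hsin l hl)
    _ = (∑ k ∈ Ioo 0 m, 1 / sin (π * k / m) ^ 2) ^ 2 := by rw [sq, sum_mul_sum]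
    _ ≤ ((m : ℝ) ^ 2) ^ 2 := by
        gcongr
        exact sum_one_div_sin_sq_le m
    _ = (m : ℝ) ^ 4 := by ring

lemma le_doubleSum {n : ℕ} (hn : 4 ≤ n) : ((n : ℝ) ^ 2) ^ 2 ≤ 64 * π ^ 4 * doubleSum n := by
  have hn' : (4 : ℝ) ≤ n := by exact_mod_cast hn
  set x : ℝ := 2 * π * ((1 : ℕ) : ℝ) / n with hx
  rw [Nat.cast_one, mul_one] at hx
  have hsin : sin x ≠ 0 := by
    refine (sin_pos_of_pos_of_lt_pi (by positivity) ?_).ne'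
    rw [hx, div_lt_iff₀ (by positivity)]; nlinarith [pi_pos]
  have hone : 1 ∈ Icc 1 (n / 2 - 1) := mem_Icc.mpr ⟨le_rfl, by omega⟩
  have hdiag : (1 / (1 - cos x ^ 2 * cos x ^ 2)) ^ 2 ≤ doubleSum n :=
    (single_le_sum (f := fun l : ℕ => (1 / (1 - cos x ^ 2 * cos (2 * π * l / n) ^ 2)) ^ 2)
        (fun _ _ => sq_nonneg _) hone).trans
      (single_le_sum (f := fun k : ℕ => ∑ l ∈ Icc 1 (n / 2 - 1),
        (1 / (1 - cos (2 * π * k / n) ^ 2 * cos (2 * π * l / n) ^ 2)) ^ 2)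
        (fun _ _ => sum_nonneg fun _ _ => sq_nonneg _) hone)
  have hpos : 0 < 1 - cos x ^ 2 * cos x ^ 2 :=
    (by positivity : (0 : ℝ) < sin x ^ 2).trans_le (sin_sq_le_one_sub_cos_sq_mul_cos_sq x x)
  calc ((n : ℝ) ^ 2) ^ 2 = 64 * π ^ 4 * (1 / (2 * x ^ 2)) ^ 2 := by
        rw [hx]; field_simp; ring
    _ ≤ 64 * π ^ 4 * (1 / (1 - cos x ^ 2 * cos x ^ 2)) ^ 2 := by
        gcongr
        exact one_sub_cos_sq_mul_cos_sq_self_le x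
    _ ≤ 64 * π ^ 4 * doubleSum n := by gcongr

theorem stmt_6 :
    (fun n : ℕ => ∑ k ∈ Finset.Icc 1 (n / 2 - 1), ∑ l ∈ Finset.Icc 1 (n / 2 - 1),
        (1 / (1 - Real.cos (2 * Real.pi * k / n) ^ 2 * Real.cos (2 * Real.pi * l / n) ^ 2)) ^ 2)
      =Θ[Filter.atTop ⊓ Filter.principal {n : ℕ | Even n}]
    (fun n : ℕ => (((n : ℝ) ^ 2) ^ 2)) := by
  change doubleSum =Θ[_] _
  have hnorm : ∀ n, ‖doubleSum n‖ = doubleSum n := fun n => norm_of_nonneg (doubleSum_nonneg n)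
  refine ⟨.of_bound 1 ?_, .of_bound (64 * π ^ 4) ?_⟩ <;>
    filter_upwards [mem_inf_of_left (eventually_ge_atTop 4),
      mem_inf_of_right (mem_principal_self _)]
      with n (hn : 4 ≤ n) (hev : Even n) <;>
    simp only [hnorm, norm_of_nonneg (by positivity : (0 : ℝ) ≤ ((n : ℝ) ^ 2) ^ 2)]
  · obtain ⟨m, rfl⟩ := hev.two_dvd
    calc doubleSum (2 * m) ≤ (m : ℝ) ^ 4 := doubleSum_two_mul_le m
      _ ≤ 1 * (((2 * m : ℕ) : ℝ) ^ 2) ^ 2 := by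
        push_cast; nlinarith [pow_nonneg (Nat.cast_nonneg (α := ℝ) m) 4]
  · exact le_doubleSum hn
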